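/- arXiv:2004.06538 — 5 statements merged into one kernel-verified Lean document; each statement's English description precedes it below -/
import Mathlib

section
/- For all real p ∈ [0, 1] and all real λ > 0, it holds that 1 - (1 - p)^λ ≥ λp / (1 + λp). -/
/-- For all real `p ∈ [0, 1]` and all real `λ > 0`,
`1 - (1 - p)^λ ≥ λp / (1 + λp)`, where `(1 - p)^λ` is a real power. -/
theorem one_sub_rpow_ge (p l : ℝ) (hp0 : 0 ≤ p) (hp1 : p ≤ 1) (hl : 0 < l) :
    l * p / (1 + l * p) ≤ 1 - (1 - p) ^ l := by
  have hlp : 0 < 1 + l * p := by positivity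
  rcases eq_or_lt_of_le hp1 with h1 | h1
  · subst h1
    rw [sub_self, Real.zero_rpow hl.ne']
    rw [div_le_iff₀ hlp]
    nlinarith
  · have h0 : 0 < 1 - p := by linarith
    have key : (1 + l * p) * (1 - p) ^ l ≤ 1 := by
      have hr : (1 - p) ^ l = Real.exp (l * Real.log (1 - p)) := by
        rw [← Real.exp_log h0, ← Real.exp_mul, Real.exp_log h0, mul_comm]
      have h1' : 1 + l * p = Real.exp (Real.log (1 + l * p)) := (Real.exp_log hlp).symm
      rw [hr, h1', ← Real.exp_add]
      have e1 : Real.log (1 + l * p) ≤ l * p := by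
        have := Real.log_le_sub_one_of_pos hlp
        linarith
      have e2 : Real.log (1 - p) ≤ -p := by
        have := Real.log_le_sub_one_of_pos h0
        linarith
      have e3 : l * Real.log (1 - p) ≤ l * (-p) :=
        mul_le_mul_of_nonneg_left e2 hl.le
      calc Real.exp (Real.log (1 + l * p) + l * Real.log (1 - p))
          ≤ Real.exp 0 := Real.exp_le_exp.mpr (by nlinarith)
        _ = 1 := Real.exp_zero
    rw [div_le_iff₀ hlp]
    nlinarith
end

section
/- Let n be a positive integer and d an integer with 1 ≤ d ≤ n. For every real λ ≥ 0: if λ ≤ √(n/d), then 1 - (1 - d/n)^{λ²/2} ≥ dλ²/(3n); and if λ > √(n/d), then 1 - (1 - d/n)^{λ²/2} ≥ 1/3. -/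
/-- Let `n` be a positive integer and `d` an integer with `1 ≤ d ≤ n`. For every real
`λ ≥ 0`: if `λ ≤ √(n/d)`, then `1 - (1 - d/n)^{λ²/2} ≥ dλ²/(3n)`; and if `λ > √(n/d)`,
then `1 - (1 - d/n)^{λ²/2} ≥ 1/3`. -/
theorem progress_probability_bound (n d : ℕ) (hn : 0 < n) (hd1 : 1 ≤ d) (hdn : d ≤ n)
    (l : ℝ) (hl : 0 ≤ l) :
    (l ≤ Real.sqrt ((n : ℝ) / d) →
      (d : ℝ) * l ^ 2 / (3 * n) ≤ 1 - (1 - (d : ℝ) / n) ^ (l ^ 2 / 2)) ∧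
    (Real.sqrt ((n : ℝ) / d) < l →
      (1 : ℝ) / 3 ≤ 1 - (1 - (d : ℝ) / n) ^ (l ^ 2 / 2)) := by
  have hn' : (0:ℝ) < n := by exact_mod_cast hn
  have hd' : (0:ℝ) < d := by exact_mod_cast hd1
  have hdn' : (d:ℝ) ≤ n := by exact_mod_cast hdn
  set x : ℝ := (d:ℝ)/n with hx
  have hx0 : 0 < x := div_pos hd' hn'
  have hx1 : x ≤ 1 := by rw [hx, div_le_one hn']; exact hdn'
  have ht : (0:ℝ) ≤ l^2/2 := by positivity
  set s : ℝ := x * (l^2/2) with hs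
  have hs0 : 0 ≤ s := by positivity
  have key : (1 - x) ^ (l^2/2) ≤ Real.exp (-s) := by
    calc (1-x)^(l^2/2) ≤ (Real.exp (-x))^(l^2/2) :=
          Real.rpow_le_rpow (by linarith) (by linarith [Real.add_one_le_exp (-x)]) ht
    _ = Real.exp (-s) := by rw [← Real.exp_mul, hs]; ring_nf
  have hnd : Real.sqrt ((n:ℝ)/d) ^ 2 = (n:ℝ)/d :=
    Real.sq_sqrt (le_of_lt (div_pos hn' hd'))
  constructor
  · intro h
    have hl2 : l ^ 2 ≤ (n:ℝ)/d := by
      rw [← hnd]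
      exact pow_le_pow_left₀ hl h 2
    have hsle : s ≤ 1/2 := by
      have hl2' : l^2 * d ≤ n := (le_div_iff₀ hd').mp hl2
      rw [hs, hx, div_mul_div_comm, div_le_div_iff₀ (by positivity) two_pos]
      nlinarith
    have hexp : Real.exp (-s) ≤ 1/(1+s) := by
      rw [Real.exp_neg, one_div]
      exact inv_anti₀ (by linarith) (by linarith [Real.add_one_le_exp s])
    have hgoal : (d:ℝ) * l ^ 2 / (3 * n) = (2/3) * s := by
      rw [hs, hx]; field_simp
    rw [hgoal]
    have h1s : 0 < 1 + s := by linarith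
    have : 1/(1+s) ≤ 1 - 2/3*s := by
      rw [div_le_iff₀ h1s]
      nlinarith
    linarith
  · intro h
    have hl2 : (n:ℝ)/d < l ^ 2 := by
      rw [← hnd]
      exact pow_lt_pow_left₀ h (Real.sqrt_nonneg _) (by norm_num)
    have hsge : 1/2 ≤ s := by
      have hl2' : (n:ℝ) < l^2 * d := (div_lt_iff₀ hd').mp hl2
      rw [hs, hx, div_mul_div_comm, div_le_div_iff₀ two_pos (by positivity)]
      nlinarith
    have hexp : Real.exp (-s) ≤ Real.exp (-(1/2)) :=
      Real.exp_le_exp.mpr (by linarith)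
    have hhalf : Real.exp (-(1/2 : ℝ)) ≤ 2/3 := by
      rw [Real.exp_neg, inv_le_comm₀ (Real.exp_pos _) (by norm_num)]
      calc (2/3 : ℝ)⁻¹ = 3/2 := by norm_num
      _ ≤ Real.exp (1/2) := by linarith [Real.add_one_le_exp (1/2 : ℝ)]
    linarith
end

section
/- Let β be a real number with 1 < β < 3, let n be a positive integer, let d be an integer with 1 ≤ d ≤ n, and let u be a positive integer. Set U = min{u, √(n/d)} and C_{β,u} = (∑_{i=1}^{u} i^{-β})^{-1}. Then C_{β,u} · (d/n) · ∑_{λ=1}^{⌈U⌉} λ^{2-β} ≥ ((β-1)/(4β)) · d · U^{3-β} / n. -/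
/-!
The normalising sum is at most `1 + ∫₁^∞ x^(-β) dx = β / (β - 1)`, so `C_{β,u} ≥ (β - 1) / β`.
For the other sum put `N = ⌈U⌉`: since `|2 - β| ≤ 1`, each of the at least `N / 2` terms with
`N / 2 < λ ≤ N` is at least `N^(2-β) / 2`, so the sum is at least `N^(3-β) / 4 ≥ U^(3-β) / 4`.
-/

open Finset

lemma sum_Icc_rpow_neg_le {s : ℝ} (hs : 1 < s) (u : ℕ) :
    ∑ i ∈ Icc 1 u, (i : ℝ) ^ (-s) ≤ s / (s - 1) := by
  have hanti : AntitoneOn (fun x : ℝ ↦ x ^ (-s)) (Set.Icc 1 u) := fun x hx y _ hxy ↦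
    Real.rpow_le_rpow_of_nonpos (zero_lt_one.trans_le hx.1) hxy (by linarith)
  have htail : ∑ i ∈ Ico 1 u, ((i + 1 : ℕ) : ℝ) ^ (-s) ≤ 1 / (s - 1) := by
    have h := AntitoneOn.sum_Ico_le_integral (a := 1) (b := u) (by exact_mod_cast hanti)
      (by exact_mod_cast integrableOn_Ioi_rpow_of_lt (a := -s) (by linarith) zero_lt_one)
      (fun t ht ↦ Real.rpow_nonneg (zero_lt_one.trans (by exact_mod_cast ht)).le _)
    rwa [Nat.cast_one, integral_Ioi_rpow_of_lt (by linarith) zero_lt_one, Real.one_rpow, neg_div,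
      ← div_neg, neg_add', neg_neg] at h
  rcases Nat.eq_zero_or_pos u with rfl | hu
  · simp only [Finset.Icc_eq_empty_of_lt zero_lt_one, sum_empty]
    exact div_nonneg (by linarith) (by linarith)
  calc ∑ i ∈ Icc 1 u, (i : ℝ) ^ (-s)
      = 1 + ∑ i ∈ Ico 1 u, ((i + 1 : ℕ) : ℝ) ^ (-s) := by
        rw [← Ioc_insert_left hu, sum_insert left_notMem_Ioc, Nat.cast_one, Real.one_rpow,
          ← Ico_add_one_add_one_eq_Ioc, ← sum_Ico_add']
    _ ≤ 1 + 1 / (s - 1) := by gcongr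
    _ = s / (s - 1) := by field_simp [(by linarith : s - 1 ≠ 0)]; ring

lemma half_rpow_le_rpow_of_le_two_mul {x y p : ℝ} (hx : 0 < x) (hxy : x ≤ y) (hyx : y ≤ 2 * x)
    (hp : p ≤ 1) : y ^ p / 2 ≤ x ^ p := by
  have hy : 0 < y := hx.trans_le hxy
  rcases le_or_gt 0 p with hp0 | hp0
  · have htwo : (2 : ℝ) ^ p ≤ 2 := by
      simpa using Real.rpow_le_rpow_of_exponent_le one_le_two hp
    calc y ^ p / 2 ≤ y ^ p / 2 ^ p := by gcongr
      _ = (y / 2) ^ p := (Real.div_rpow hy.le zero_le_two _).symm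
      _ ≤ x ^ p := by gcongr; linarith
  · calc y ^ p / 2 ≤ y ^ p := half_le_self (by positivity)
      _ ≤ x ^ p := Real.rpow_le_rpow_of_nonpos hx hxy hp0.le

lemma rpow_add_one_div_four_le_sum_Icc {p : ℝ} (hp : p ≤ 1) {N : ℕ} (hN : 0 < N) :
    (N : ℝ) ^ (p + 1) / 4 ≤ ∑ l ∈ Icc 1 N, (l : ℝ) ^ p := by
  have hcard : (N : ℝ) ≤ 2 * #(Ioc (N / 2) N) := by
    rw [Nat.card_Ioc]; exact_mod_cast (by omega : N ≤ 2 * (N - N / 2))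
  have hterm : ∀ l ∈ Ioc (N / 2) N, (N : ℝ) ^ p / 2 ≤ (l : ℝ) ^ p := by
    intro l hl
    obtain ⟨hlo, hhi⟩ := mem_Ioc.1 hl
    exact half_rpow_le_rpow_of_le_two_mul (by exact_mod_cast (by omega : 0 < l))
      (by exact_mod_cast hhi) (by exact_mod_cast (by omega : N ≤ 2 * l)) hp
  calc (N : ℝ) ^ (p + 1) / 4 = N / 2 * (N ^ p / 2) := by
        rw [Real.rpow_add_one (by positivity)]; ring
    _ ≤ #(Ioc (N / 2) N) * (N ^ p / 2) := by gcongr; linarith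
    _ ≤ ∑ l ∈ Ioc (N / 2) N, (l : ℝ) ^ p := by
        simpa using card_nsmul_le_sum _ _ _ hterm
    _ ≤ ∑ l ∈ Icc 1 N, (l : ℝ) ^ p :=
        sum_le_sum_of_subset_of_nonneg (fun _ _ ↦ by grind) (fun _ _ _ ↦ by positivity)

lemma rpow_add_one_div_four_le_sum_Icc_ceil {p U : ℝ} (hp₀ : -1 ≤ p) (hp₁ : p ≤ 1) (hU : 0 < U) :
    U ^ (p + 1) / 4 ≤ ∑ l ∈ Icc 1 ⌈U⌉₊, (l : ℝ) ^ p := by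
  calc U ^ (p + 1) / 4 ≤ (⌈U⌉₊ : ℝ) ^ (p + 1) / 4 := by
        gcongr
        · linarith
        · exact Nat.le_ceil U
    _ ≤ _ := rpow_add_one_div_four_le_sum_Icc hp₁ (Nat.ceil_pos.2 hU)

theorem progress_probability_heavy_tailed_general (β : ℝ) (hβ1 : 1 < β) (hβ3 : β < 3)
    (n d u : ℕ) (hn : 0 < n) (hd1 : 1 ≤ d) (hu : 0 < u) :
    (β - 1) / (4 * β) * d * (min (u : ℝ) (Real.sqrt ((n : ℝ) / d))) ^ (3 - β) / n ≤
      (∑ i ∈ Finset.Icc 1 u, (i : ℝ) ^ (-β))⁻¹ * ((d : ℝ) / n) *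
        ∑ l ∈ Finset.Icc 1 ⌈min (u : ℝ) (Real.sqrt ((n : ℝ) / d))⌉₊, (l : ℝ) ^ (2 - β) := by
  set U : ℝ := min (u : ℝ) (Real.sqrt ((n : ℝ) / d))
  have hU : 0 < U := lt_min (by exact_mod_cast hu) (Real.sqrt_pos.2 (by positivity))
  have hC : (β - 1) / β ≤ (∑ i ∈ Icc 1 u, (i : ℝ) ^ (-β))⁻¹ := by
    rw [← inv_div]
    have hpos : ∀ i ∈ Icc 1 u, 0 < (i : ℝ) ^ (-β) := fun i hi ↦
      Real.rpow_pos_of_pos (by exact_mod_cast (mem_Icc.1 hi).1) _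
    exact inv_anti₀ (sum_pos hpos ⟨1, mem_Icc.2 ⟨le_rfl, hu⟩⟩) (sum_Icc_rpow_neg_le hβ1 u)
  have hT : U ^ (3 - β) / 4 ≤ ∑ l ∈ Icc 1 ⌈U⌉₊, (l : ℝ) ^ (2 - β) := by
    rw [show 3 - β = 2 - β + 1 by ring]
    exact rpow_add_one_div_four_le_sum_Icc_ceil (by linarith) (by linarith) hU
  calc (β - 1) / (4 * β) * d * U ^ (3 - β) / n
      = (β - 1) / β * (d / n) * (U ^ (3 - β) / 4) := by field_simp
    _ ≤ _ := by gcongr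

/-- Let `1 < β < 3`, `n` a positive integer, `1 ≤ d ≤ n`, and `u` a positive integer.
With `U = min{u, √(n/d)}` and `C_{β,u} = (∑_{i=1}^{u} i^{-β})⁻¹`, it holds that
`C_{β,u} · (d/n) · ∑_{λ=1}^{⌈U⌉} λ^{2-β} ≥ ((β-1)/(4β)) · d · U^{3-β} / n`. -/
theorem progress_probability_heavy_tailed (β : ℝ) (hβ1 : 1 < β) (hβ3 : β < 3)
    (n d u : ℕ) (hn : 0 < n) (hd1 : 1 ≤ d) (hdn : d ≤ n) (hu : 0 < u) :
    (β - 1) / (4 * β) * d * (min (u : ℝ) (Real.sqrt ((n : ℝ) / d))) ^ (3 - β) / n ≤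
      (∑ i ∈ Finset.Icc 1 u, (i : ℝ) ^ (-β))⁻¹ * ((d : ℝ) / n) *
        ∑ l ∈ Finset.Icc 1 ⌈min (u : ℝ) (Real.sqrt ((n : ℝ) / d))⌉₊, (l : ℝ) ^ (2 - β) :=
  progress_probability_heavy_tailed_general β hβ1 hβ3 n d u hn hd1 hu
end

section
/- Let β be a real number with 1 < β < 2 and let u be a positive integer. Then ((β-1)/β) · (u^{2-β} - 1)/(2-β) ≤ (∑_{i=1}^{u} i^{1-β}) / (∑_{i=1}^{u} i^{-β}) ≤ u^{2-β}/(2-β). In particular, the expectation of a random variable distributed according to the power-law distribution with exponent β and upper limit u is Θ(u^{2-β}). -/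
/-!
For `s ≤ 0` the map `x ↦ x ^ s` is antitone on `[1, ∞)`, so `∑_{i=1}^u i ^ s` lies between
`∫₁ᵘ x ^ s dx` and `1 + ∫₁ᵘ x ^ s dx`. With `s = 1 - β` this squeezes the numerator between
`(u^{2-β} - 1)/(2-β)` and `u^{2-β}/(2-β)`; with `s = -β` the denominator lies between `1` and
`β/(β-1)`.
-/

open Finset intervalIntegral

namespace PowerLaw

variable {s : ℝ} {u : ℕ}

lemma antitoneOn_rpow_Icc (hs : s ≤ 0) (b : ℝ) : AntitoneOn (fun x : ℝ => x ^ s) (Set.Icc 1 b) :=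
  fun _ hx _ _ hxy => Real.rpow_le_rpow_of_nonpos (one_pos.trans_le hx.1) hxy hs

lemma integral_one_rpow (hs : s ≠ -1) (hu : 0 < u) :
    ∫ x in (1 : ℝ)..u, x ^ s = ((u : ℝ) ^ (s + 1) - 1) / (s + 1) := by
  have hu1 : (1 : ℝ) ≤ u := by exact_mod_cast hu
  have h0 : (0 : ℝ) ∉ Set.uIcc 1 (u : ℝ) := by
    rw [Set.uIcc_of_le hu1]
    exact fun h => by linarith [h.1]
  rw [integral_rpow (Or.inr ⟨hs, h0⟩), Real.one_rpow]

lemma integral_rpow_le_sum_Icc (hs : s ≤ 0) (hu : 0 < u) :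
    ∫ x in (1 : ℝ)..u, x ^ s ≤ ∑ i ∈ Icc 1 u, (i : ℝ) ^ s := by
  have h := AntitoneOn.integral_le_sum_Ico hu (by simpa using antitoneOn_rpow_Icc hs u)
  simp only [Nat.cast_one] at h
  exact h.trans <| sum_le_sum_of_subset_of_nonneg Ico_subset_Icc_self fun i _ _ => by positivity

-- Comparing `i ^ s` with the integral over `[i - 1, i]` for `i ≥ 2` leaves the term `i = 1` over.
lemma sum_Icc_rpow_le_one_add_integral (hs : s ≤ 0) (hu : 0 < u) :
    ∑ i ∈ Icc 1 u, (i : ℝ) ^ s ≤ 1 + ∫ x in (1 : ℝ)..u, x ^ s := by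
  have h := AntitoneOn.sum_le_integral_Ico hu (by simpa using antitoneOn_rpow_Icc hs u)
  have split : ∑ i ∈ Icc 1 u, (i : ℝ) ^ s = 1 + ∑ i ∈ Ico 1 u, ((i + 1 : ℕ) : ℝ) ^ s := by
    rw [← Ico_add_one_right_eq_Icc, sum_eq_sum_Ico_succ_bot (by omega), Nat.cast_one,
      Real.one_rpow, ← sum_Ico_add' (fun i : ℕ => (i : ℝ) ^ s) 1 u 1]
  simp only [Nat.cast_one] at h
  linarith

lemma one_le_sum_Icc_rpow (hu : 0 < u) : 1 ≤ ∑ i ∈ Icc 1 u, (i : ℝ) ^ s := by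
  simpa using single_le_sum (f := fun i : ℕ => (i : ℝ) ^ s) (fun i _ => by positivity)
    (left_mem_Icc.mpr hu)

lemma sub_one_div_le_sum_Icc_rpow (hs : s ≤ 0) (hs1 : s ≠ -1) (hu : 0 < u) :
    ((u : ℝ) ^ (s + 1) - 1) / (s + 1) ≤ ∑ i ∈ Icc 1 u, (i : ℝ) ^ s :=
  integral_one_rpow hs1 hu ▸ integral_rpow_le_sum_Icc hs hu

lemma sum_Icc_rpow_le_div (hs : s ≤ 0) (hs1 : -1 < s) (hu : 0 < u) :
    ∑ i ∈ Icc 1 u, (i : ℝ) ^ s ≤ (u : ℝ) ^ (s + 1) / (s + 1) := by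
  have h := sum_Icc_rpow_le_one_add_integral hs hu
  rw [integral_one_rpow hs1.ne' hu] at h
  have hs1' : 0 < s + 1 := by linarith
  calc ∑ i ∈ Icc 1 u, (i : ℝ) ^ s ≤ 1 + ((u : ℝ) ^ (s + 1) - 1) / (s + 1) := h
    _ = ((u : ℝ) ^ (s + 1) + s) / (s + 1) := by field_simp; ring
    _ ≤ (u : ℝ) ^ (s + 1) / (s + 1) := by gcongr; linarith

lemma sum_Icc_rpow_neg_le (β : ℝ) (hβ : 1 < β) (hu : 0 < u) :
    ∑ i ∈ Icc 1 u, (i : ℝ) ^ (-β) ≤ β / (β - 1) := by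
  have h := sum_Icc_rpow_le_one_add_integral (s := -β) (by linarith) hu
  rw [integral_one_rpow (by linarith) hu] at h
  have hβ1 : 0 < β - 1 := by linarith
  calc ∑ i ∈ Icc 1 u, (i : ℝ) ^ (-β) ≤ 1 + ((u : ℝ) ^ (-β + 1) - 1) / (-β + 1) := h
    _ = (β - (u : ℝ) ^ (-β + 1)) / (β - 1) := by
      rw [show -β + 1 = -(β - 1) by ring, div_neg, ← neg_div]; field_simp; ring
    _ ≤ β / (β - 1) := by gcongr; simp only [sub_le_self_iff]; positivity

end PowerLaw

open PowerLaw in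
/-- Let `1 < β < 2` and `u` a positive integer. Then
`((β-1)/β) · (u^{2-β} - 1)/(2-β) ≤ (∑_{i=1}^{u} i^{1-β}) / (∑_{i=1}^{u} i^{-β})
≤ u^{2-β}/(2-β)`: the expectation of the power-law distribution with exponent `β`
and upper limit `u` is `Θ(u^{2-β})`. -/
theorem expectation_theta_u_pow (β : ℝ) (hβ1 : 1 < β) (hβ2 : β < 2) (u : ℕ) (hu : 0 < u) :
    (β - 1) / β * (((u : ℝ) ^ (2 - β) - 1) / (2 - β)) ≤
      (∑ i ∈ Finset.Icc 1 u, (i : ℝ) ^ (1 - β)) / (∑ i ∈ Finset.Icc 1 u, (i : ℝ) ^ (-β)) ∧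
    (∑ i ∈ Finset.Icc 1 u, (i : ℝ) ^ (1 - β)) / (∑ i ∈ Finset.Icc 1 u, (i : ℝ) ^ (-β)) ≤
      (u : ℝ) ^ (2 - β) / (2 - β) := by
  set S₁ := ∑ i ∈ Finset.Icc 1 u, (i : ℝ) ^ (1 - β)
  set S₀ := ∑ i ∈ Finset.Icc 1 u, (i : ℝ) ^ (-β)
  have two_sub : 1 - β + 1 = 2 - β := by ring
  have hS₁_lower : ((u : ℝ) ^ (2 - β) - 1) / (2 - β) ≤ S₁ :=
    two_sub ▸ sub_one_div_le_sum_Icc_rpow (by linarith) (by linarith) hu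
  have hS₁_upper : S₁ ≤ (u : ℝ) ^ (2 - β) / (2 - β) :=
    two_sub ▸ sum_Icc_rpow_le_div (by linarith) (by linarith) hu
  have hS₀_lower : 1 ≤ S₀ := one_le_sum_Icc_rpow hu
  have hS₀_upper : S₀ ≤ β / (β - 1) := sum_Icc_rpow_neg_le β hβ1 hu
  have hS₁ : 0 ≤ S₁ := sum_nonneg fun i _ => by positivity
  constructor
  · calc (β - 1) / β * (((u : ℝ) ^ (2 - β) - 1) / (2 - β)) ≤ (β - 1) / β * S₁ := by
          gcongr
      _ = S₁ / (β / (β - 1)) := by field_simp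
      _ ≤ S₁ / S₀ := div_le_div_of_nonneg_left hS₁ (by linarith) hS₀_upper
  · calc S₁ / S₀ ≤ S₁ / 1 := div_le_div_of_nonneg_left hS₁ one_pos hS₀_lower
      _ = S₁ := div_one S₁
      _ ≤ _ := hS₁_upper
end

section
/- (Wald's equation.) Let (X_t)_{t∈ℕ} be a sequence of real-valued random variables on a probability space and let T be a positive-integer-valued random variable on the same space. Assume: (1) all X_t have the same finite expectation; (2) for all t ∈ ℕ, E[X_t · 1_{{T ≥ t}}] = E[X_t] · Pr[T ≥ t]; (3) ∑_{t=1}^{∞} E[|X_t| · 1_{{T ≥ t}}] < ∞; and (4) E[T] is finite. Then E[∑_{t=1}^{T} X_t] = E[T] · E[X_1]. -/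
/-!
Write the random sum as `∑_{t ≥ 1} X_t · 1_{T ≥ t}`. Summability of `E[|X_t| · 1_{T ≥ t}]` lets
expectation and sum be exchanged; by (2) and (1) the `t`-th term is `E[X_1] · Pr[T ≥ t]`, and
`∑_{t ≥ 1} Pr[T ≥ t] = E[T]` is the tail-sum formula for a `ℕ`-valued random variable.
-/

open MeasureTheory ENNReal

theorem tsum_ite_succ_le_eq_sum_Icc {M : Type*} [AddCommMonoid M] [TopologicalSpace M]
    [T2Space M] (f : ℕ → M) (n : ℕ) :
    ∑' t : ℕ, (if t + 1 ≤ n then f (t + 1) else 0) = ∑ t ∈ Finset.Icc 1 n, f t := by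
  rw [tsum_eq_sum (s := Finset.range n) fun t ht => if_neg (by simpa using ht)]
  calc _ = ∑ t ∈ Finset.range n, f (t + 1) :=
        Finset.sum_congr rfl fun t ht => if_pos (Finset.mem_range.1 ht)
    _ = _ := by
      rw [Finset.range_eq_Ico, Finset.sum_Ico_add', zero_add, Finset.Ico_add_one_right_eq_Icc]

section TailSum

variable {Ω : Type*} [MeasurableSpace Ω] (μ : Measure Ω) {T : Ω → ℕ}

theorem lintegral_natCast_eq_tsum_measure (hT : Measurable T) :
    ∫⁻ ω, (T ω : ℝ≥0∞) ∂μ = ∑' t : ℕ, μ {ω | t + 1 ≤ T ω} := by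
  have hS : ∀ t : ℕ, MeasurableSet {ω | t + 1 ≤ T ω} := fun t => hT measurableSet_Ici
  simp_rw [← lintegral_indicator_one (hS _)]
  rw [← lintegral_tsum fun t => (measurable_one.indicator (hS t)).aemeasurable]
  refine lintegral_congr fun ω => ?_
  simp only [Set.indicator_apply, Set.mem_ofPred_eq, Pi.one_apply]
  rw [tsum_ite_succ_le_eq_sum_Icc (fun _ => 1)]
  simp

theorem integral_natCast_eq_tsum_measureReal (hT : Measurable T)
    (hT_int : Integrable (fun ω => (T ω : ℝ)) μ) :
    ∫ ω, (T ω : ℝ) ∂μ = ∑' t : ℕ, μ.real {ω | t + 1 ≤ T ω} := by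
  have h_fin : ∑' t : ℕ, μ {ω | t + 1 ≤ T ω} ≠ ∞ := by
    rw [← lintegral_natCast_eq_tsum_measure μ hT]
    simpa only [ofReal_natCast] using hT_int.lintegral_lt_top.ne
  rw [integral_eq_lintegral_of_nonneg_ae (.of_forall fun ω => by positivity)
    hT_int.aestronglyMeasurable]
  simp only [ofReal_natCast, lintegral_natCast_eq_tsum_measure μ hT, measureReal_def]
  exact ENNReal.tsum_toReal_eq (ENNReal.ne_top_of_tsum_ne_top h_fin)

end TailSum

theorem integral_sum_Icc_eq_tsum_setIntegral {Ω E : Type*} [MeasurableSpace Ω]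
    [NormedAddCommGroup E] [NormedSpace ℝ E] {μ : Measure Ω} {X : ℕ → Ω → E} {T : Ω → ℕ}
    (hT : Measurable T) (hX : ∀ t, 1 ≤ t → Integrable (X t) μ)
    (h_sum : Summable fun t : ℕ => ∫ ω in {ω | t + 1 ≤ T ω}, ‖X (t + 1) ω‖ ∂μ) :
    ∫ ω, ∑ t ∈ Finset.Icc 1 (T ω), X t ω ∂μ =
      ∑' t : ℕ, ∫ ω in {ω | t + 1 ≤ T ω}, X (t + 1) ω ∂μ := by
  have hS : ∀ t : ℕ, MeasurableSet {ω | t + 1 ≤ T ω} := fun t => hT measurableSet_Ici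
  set F : ℕ → Ω → E := fun t => {ω | t + 1 ≤ T ω}.indicator (X (t + 1))
  have h_pointwise : ∀ ω, ∑ t ∈ Finset.Icc 1 (T ω), X t ω = ∑' t, F t ω := fun ω => by
    simp only [F, Set.indicator_apply, Set.mem_ofPred_eq]
    exact (tsum_ite_succ_le_eq_sum_Icc (fun t => X t ω) (T ω)).symm
  have h_norm : ∀ t, ∫ ω, ‖F t ω‖ ∂μ = ∫ ω in {ω | t + 1 ≤ T ω}, ‖X (t + 1) ω‖ ∂μ := fun t => by
    simp only [F, norm_indicator_eq_indicator_norm, integral_indicator (hS t)]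
  simp_rw [h_pointwise]
  rw [← integral_tsum_of_summable_integral_norm
    (fun t => (hX (t + 1) (Nat.le_add_left 1 t)).indicator (hS t))
    (h_sum.congr fun t => (h_norm t).symm)]
  simp only [integral_indicator (hS _)]

theorem wald_equation_general {Ω : Type*} [MeasureSpace Ω]
    (X : ℕ → Ω → ℝ) (T : Ω → ℕ) (hT_meas : Measurable T)
    (h_int : ∀ t, 1 ≤ t → Integrable (X t))
    (h_same : ∀ t, 1 ≤ t → ∫ ω, X t ω = ∫ ω, X 1 ω)
    (h_indep : ∀ t, 1 ≤ t →
      ∫ ω in {ω | t ≤ T ω}, X t ω =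
        (∫ ω, X t ω) * ((volume : Measure Ω) {ω | t ≤ T ω}).toReal)
    (h_sum : Summable (fun t : ℕ => ∫ ω in {ω | t + 1 ≤ T ω}, |X (t + 1) ω|))
    (hT_int : Integrable (fun ω => (T ω : ℝ))) :
    ∫ ω, ∑ t ∈ Finset.Icc 1 (T ω), X t ω = (∫ ω, (T ω : ℝ)) * ∫ ω, X 1 ω := by
  have h_term : ∀ t : ℕ, ∫ ω in {ω | t + 1 ≤ T ω}, X (t + 1) ω =
      (∫ ω, X 1 ω) * (volume : Measure Ω).real {ω | t + 1 ≤ T ω} := fun t => by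
    rw [h_indep (t + 1) (Nat.le_add_left 1 t), h_same (t + 1) (Nat.le_add_left 1 t),
      measureReal_def]
  rw [integral_sum_Icc_eq_tsum_setIntegral hT_meas h_int (by simpa only [Real.norm_eq_abs]),
    tsum_congr h_term, tsum_mul_left, integral_natCast_eq_tsum_measureReal _ hT_meas hT_int,
    mul_comm]

/-- Wald's equation. Let `(X_t)` be a sequence of real-valued random variables and `T` a
positive-integer-valued random variable on a probability space. Assume: (1) all `X_t`
(`t ≥ 1`) are integrable with the same expectation; (2) for all `t ≥ 1`,
`E[X_t · 1_{T ≥ t}] = E[X_t] · Pr[T ≥ t]`; (3) `∑_{t≥1} E[|X_t| · 1_{T ≥ t}] < ∞`;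
(4) `E[T]` is finite. Then `E[∑_{t=1}^{T} X_t] = E[T] · E[X_1]`. -/
theorem wald_equation {Ω : Type*} [MeasureSpace Ω]
    [IsProbabilityMeasure (volume : Measure Ω)]
    (X : ℕ → Ω → ℝ) (T : Ω → ℕ) (hT_meas : Measurable T) (hT_pos : ∀ ω, 1 ≤ T ω)
    (h_int : ∀ t, 1 ≤ t → Integrable (X t))
    (h_same : ∀ t, 1 ≤ t → ∫ ω, X t ω = ∫ ω, X 1 ω)
    (h_indep : ∀ t, 1 ≤ t →
      ∫ ω in {ω | t ≤ T ω}, X t ω =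
        (∫ ω, X t ω) * ((volume : Measure Ω) {ω | t ≤ T ω}).toReal)
    (h_sum : Summable (fun t : ℕ => ∫ ω in {ω | t + 1 ≤ T ω}, |X (t + 1) ω|))
    (hT_int : Integrable (fun ω => (T ω : ℝ))) :
    ∫ ω, ∑ t ∈ Finset.Icc 1 (T ω), X t ω = (∫ ω, (T ω : ℝ)) * ∫ ω, X 1 ω :=
  wald_equation_general X T hT_meas h_int h_same h_indep h_sum hT_int
end
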